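/- arXiv:2204.02432 — 3 statements merged into one kernel-verified Lean document; each statement's English description precedes it below -/
import Mathlib

section
/- General coarsening identification (Proposition 2): under assumptions (a)–(c), for every bounded measurable f : 𝒳 → ℝ and every bounded 𝓖-measurable random variable Z, E[Z·f(X)] = E[Z·w·f(X)]. Equivalently, almost everywhere on {C ≠ ∞}, E[f(X)|𝓖] = E[S·f(X)|𝓖]/η, while on {C = ∞}, E[f(X)|𝓖] = f(X); hence the conditional law of the full data X given the initially observed data (C, W), and therefore the complete-data distribution, is identified from the observed data (C, W, S, and X on {S = 1}). -/
open MeasureTheory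

/-! Off `{C = ∞}` we have `w f(X) = η⁻¹ · S f(X)` with `η⁻¹ ≤ ε⁻¹` bounded and `𝓖`-measurable, so
it can be pulled out of `E[· | 𝓖]`; Assumption 4 then gives `E[w f(X) | 𝓖] = E[f(X) | 𝓖]` on
all of `Ω`. Testing this against a bounded `𝓖`-measurable `Z` yields `E[Z f(X)] = E[Z w f(X)]`. -/

section InverseProbabilityWeighting

variable {Ω : Type*} {m m0 : MeasurableSpace Ω} {μ : Measure Ω}

theorem integral_mul_condExp_of_bound [IsFiniteMeasure μ] (hm : m ≤ m0) {Z g : Ω → ℝ}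
    (hZ : StronglyMeasurable[m] Z) (c : ℝ) (hZc : ∀ᵐ ω ∂μ, ‖Z ω‖ ≤ c) (hg : Integrable g μ) :
    ∫ ω, Z ω * (μ[g | m]) ω ∂μ = ∫ ω, Z ω * g ω ∂μ := calc
  _ = ∫ ω, (μ[Z * g | m]) ω ∂μ :=
    integral_congr_ae (condExp_stronglyMeasurable_mul_of_bound hm hZ hg c hZc).symm
  _ = ∫ ω, Z ω * g ω ∂μ := integral_condExp hm

/-- The weight `w` of the paper, with `A = {C = ∞}` the fully observed set. -/
noncomputable def ipwWeight (A : Set Ω) (S η : Ω → ℝ) : Ω → ℝ :=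
  A.indicator 1 + Aᶜ.indicator (S / η)

theorem ipwWeight_mul (A : Set Ω) (S η g : Ω → ℝ) :
    ipwWeight A S η * g = A.indicator g + Aᶜ.indicator η⁻¹ * (S * g) := by
  ext ω
  by_cases h : ω ∈ A
  · simp [ipwWeight, h]
  · simp [ipwWeight, h, div_eq_mul_inv]
    ring

variable {A : Set Ω} {S η g : Ω → ℝ} {ε : ℝ}

theorem ae_norm_indicator_compl_inv_le (hε : 0 < ε) (hc : ∀ᵐ ω ∂μ, ω ∉ A → ε ≤ η ω) :
    ∀ᵐ ω ∂μ, ‖Aᶜ.indicator η⁻¹ ω‖ ≤ ε⁻¹ := by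
  filter_upwards [hc] with ω hω
  by_cases h : ω ∈ A
  · simp [h, hε.le]
  · have hη : ε ≤ η ω := hω h
    rw [Set.indicator_of_mem (Set.mem_compl h), Pi.inv_apply, norm_inv,
      Real.norm_of_nonneg (hε.trans_le hη).le]
    exact inv_anti₀ hε hη

theorem condExp_eq_condExp_mul_div (hε : 0 < ε) (hc : ∀ᵐ ω ∂μ, ω ∉ A → ε ≤ η ω)
    (hb : ∀ᵐ ω ∂μ, ω ∉ A → (μ[S * g | m]) ω = η ω * (μ[g | m]) ω) :
    ∀ᵐ ω ∂μ, ω ∉ A → (μ[g | m]) ω = (μ[S * g | m]) ω / η ω := by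
  filter_upwards [hb, hc] with ω hb hc hA
  rw [hb hA, mul_div_cancel_left₀ _ (hε.trans_le (hc hA)).ne']

theorem integrable_indicator_compl_inv_mul (hm : m ≤ m0) (hA : MeasurableSet[m] A)
    (hη : Measurable[m] η) (hε : 0 < ε) (hc : ∀ᵐ ω ∂μ, ω ∉ A → ε ≤ η ω)
    (hSg : Integrable (S * g) μ) : Integrable (Aᶜ.indicator η⁻¹ * (S * g)) μ :=
  hSg.bdd_mul ((hη.inv.indicator hA.compl).mono hm le_rfl).aestronglyMeasurable
    (ae_norm_indicator_compl_inv_le hε hc)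

theorem integrable_ipwWeight_mul (hm : m ≤ m0) (hA : MeasurableSet[m] A)
    (hη : Measurable[m] η) (hε : 0 < ε) (hc : ∀ᵐ ω ∂μ, ω ∉ A → ε ≤ η ω)
    (hg : Integrable g μ) (hSg : Integrable (S * g) μ) : Integrable (ipwWeight A S η * g) μ := by
  rw [ipwWeight_mul]
  exact (hg.indicator (hm _ hA)).add (integrable_indicator_compl_inv_mul hm hA hη hε hc hSg)

theorem condExp_ipwWeight_mul [IsFiniteMeasure μ] (hm : m ≤ m0) (hA : MeasurableSet[m] A)
    (hη : Measurable[m] η) (hε : 0 < ε) (hc : ∀ᵐ ω ∂μ, ω ∉ A → ε ≤ η ω)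
    (hg : Integrable g μ) (hSg : Integrable (S * g) μ)
    (hb : ∀ᵐ ω ∂μ, ω ∉ A → (μ[S * g | m]) ω = η ω * (μ[g | m]) ω) :
    μ[ipwWeight A S η * g | m] =ᵐ[μ] μ[g | m] := by
  rw [ipwWeight_mul]
  filter_upwards [condExp_add (hg.indicator (hm _ hA))
      (integrable_indicator_compl_inv_mul hm hA hη hε hc hSg) m, condExp_indicator hg hA,
    condExp_stronglyMeasurable_mul_of_bound hm (hη.inv.indicator hA.compl).stronglyMeasurable
      hSg _ (ae_norm_indicator_compl_inv_le hε hc),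
    condExp_eq_condExp_mul_div hε hc hb] with ω hadd hind hpull hdiv
  rw [hadd, Pi.add_apply, hind, hpull]
  by_cases h : ω ∈ A
  · simp [h]
  · simp [h, hdiv h, div_eq_inv_mul]

theorem integral_mul_ipwWeight_mul [IsFiniteMeasure μ] (hm : m ≤ m0) (hA : MeasurableSet[m] A)
    (hη : Measurable[m] η) (hε : 0 < ε) (hc : ∀ᵐ ω ∂μ, ω ∉ A → ε ≤ η ω)
    (hg : Integrable g μ) (hSg : Integrable (S * g) μ)
    (hb : ∀ᵐ ω ∂μ, ω ∉ A → (μ[S * g | m]) ω = η ω * (μ[g | m]) ω)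
    {Z : Ω → ℝ} (hZ : StronglyMeasurable[m] Z) (c : ℝ) (hZc : ∀ᵐ ω ∂μ, ‖Z ω‖ ≤ c) :
    ∫ ω, Z ω * (ipwWeight A S η * g) ω ∂μ = ∫ ω, Z ω * g ω ∂μ := calc
  _ = ∫ ω, Z ω * (μ[ipwWeight A S η * g | m]) ω ∂μ :=
    (integral_mul_condExp_of_bound hm hZ c hZc
      (integrable_ipwWeight_mul hm hA hη hε hc hg hSg)).symm
  _ = ∫ ω, Z ω * (μ[g | m]) ω ∂μ := by
    refine integral_congr_ae ?_
    filter_upwards [condExp_ipwWeight_mul hm hA hη hε hc hg hSg hb] with ω h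
    rw [h]
  _ = ∫ ω, Z ω * g ω ∂μ := integral_mul_condExp_of_bound hm hZ c hZc hg

end InverseProbabilityWeighting

/-- General coarsening identification (Proposition 2): under assumptions (a)–(c),
for every bounded measurable `f : 𝒳 → ℝ` and bounded `𝓖`-measurable `Z`,
`E[Z·f(X)] = E[Z·w·f(X)]`; equivalently, a.e. on `{C ≠ ∞}`,
`E[f(X)|𝓖] = E[S·f(X)|𝓖]/η`, while on `{C = ∞}`, `E[f(X)|𝓖] = f(X)`. Hence the
complete-data distribution is identified from the observed data. -/
theorem general_coarsening_identification
    {Ω : Type*} [MeasurableSpace Ω] (P : Measure Ω) [IsProbabilityMeasure P]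
    {𝒳 : Type*} [MeasurableSpace 𝒳] {𝒴 : Type*} [MeasurableSpace 𝒴]
    {K : Type*} [MeasurableSpace K] [MeasurableSingletonClass K] [Countable K] [DecidableEq K]
    (infty : K)
    (X : Ω → 𝒳) (C : Ω → K) (W : Ω → 𝒴) (S : Ω → ℝ)
    (hX : Measurable X) (hC : Measurable C) (hW : Measurable W) (hS : Measurable S)
    (hS01 : ∀ ω, S ω = 0 ∨ S ω = 1)
    (𝓖 : MeasurableSpace Ω)
    (h𝓖 : 𝓖 = MeasurableSpace.comap (fun ω => (C ω, W ω)) inferInstance)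
    (η : Ω → ℝ) (hη : η = P[S | 𝓖])
    (w : Ω → ℝ) (hw : w = fun ω => if C ω = infty then 1 else S ω / η ω)
    -- (a) on {C = ∞} the full data are initially observed
    (ha : ∀ f : 𝒳 → ℝ, Measurable f → (∃ B, ∀ x, |f x| ≤ B) →
      ∀ᵐ ω ∂P, C ω = infty → (P[fun ω' => f (X ω') | 𝓖]) ω = f (X ω))
    -- (b) no informative second-stage missingness (Assumption 4)
    (hb : ∀ f : 𝒳 → ℝ, Measurable f → (∃ B, ∀ x, |f x| ≤ B) →
      ∀ᵐ ω ∂P, C ω ≠ infty →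
        (P[fun ω' => S ω' * f (X ω') | 𝓖]) ω
          = η ω * (P[fun ω' => f (X ω') | 𝓖]) ω)
    -- (c) positivity (Assumption 5)
    (ε : ℝ) (hε : 0 < ε)
    (hc : ∀ᵐ ω ∂P, C ω ≠ infty → ε ≤ η ω) :
    ∀ f : 𝒳 → ℝ, Measurable f → (∃ B, ∀ x, |f x| ≤ B) →
      (∀ Z : Ω → ℝ, Measurable[𝓖] Z → (∃ B, ∀ ω, |Z ω| ≤ B) →
        ∫ ω, Z ω * f (X ω) ∂P = ∫ ω, Z ω * w ω * f (X ω) ∂P)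
      ∧ (∀ᵐ ω ∂P, C ω ≠ infty →
          (P[fun ω' => f (X ω') | 𝓖]) ω
            = (P[fun ω' => S ω' * f (X ω') | 𝓖]) ω / η ω)
      ∧ (∀ᵐ ω ∂P, C ω = infty → (P[fun ω' => f (X ω') | 𝓖]) ω = f (X ω)) := by
  intro f hf ⟨B, hB⟩
  set A : Set Ω := {ω | C ω = infty}
  have hm : 𝓖 ≤ _ := h𝓖.trans_le (hC.prodMk hW).comap_le
  have hA : MeasurableSet[𝓖] A := by
    rw [h𝓖]
    exact (measurable_fst.comp (comap_measurable _)) (measurableSet_singleton infty)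
  have hη𝓖 : Measurable[𝓖] η := hη ▸ stronglyMeasurable_condExp.measurable
  have hfX : Integrable (fun ω => f (X ω)) P :=
    .of_bound (hf.comp hX).aestronglyMeasurable B (.of_forall fun ω => hB (X ω))
  have hSfX : Integrable (S * fun ω => f (X ω)) P :=
    hfX.bdd_mul hS.aestronglyMeasurable (c := 1) <| .of_forall fun ω => by
      rcases hS01 ω with h | h <;> simp [h]
  have hw_eq : w = ipwWeight A S η := by
    ext ω
    by_cases h : C ω = infty <;> simp [hw, ipwWeight, A, h]
  refine ⟨fun Z hZ ⟨BZ, hBZ⟩ => ?_, condExp_eq_condExp_mul_div (A := A) hε hc (hb f hf ⟨B, hB⟩),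
    ha f hf ⟨B, hB⟩⟩
  simp_rw [mul_assoc, hw_eq]
  exact (integral_mul_ipwWeight_mul hm hA hη𝓖 hε hc hfX hSfX (hb f hf ⟨B, hB⟩)
    hZ.stronglyMeasurable BZ (.of_forall hBZ)).symm
end

section
/- General inverse-probability-weighting identity for arbitrary coarsening: under assumptions (a)–(c), for every measurable φ : 𝒳 → ℝ such that φ(X) and w·φ(X) are integrable and E[S·φ(X)|𝓖] = η·E[φ(X)|𝓖] almost everywhere on {C ≠ ∞} (in particular for every bounded measurable φ), it holds that E[w·φ(X)] = E[φ(X)]; that is, inverse weighting by the second-stage sampling probabilities recovers every full-data mean from the observed data. -/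
open MeasureTheory

private lemma ipw_aux {Ω : Type*} {𝓖 : MeasurableSpace Ω} {mΩ : MeasurableSpace Ω}
    (hm : 𝓖 ≤ mΩ) (P : Measure Ω) [IsProbabilityMeasure P]
    {A : Set Ω} (hA𝓖 : MeasurableSet[𝓖] A)
    {S η g wg : Ω → ℝ}
    (hη𝓖 : StronglyMeasurable[𝓖] η)
    (hS : Measurable S) (hS1 : ∀ ω, |S ω| ≤ 1)
    (hgint : Integrable g P) (hwgint : Integrable wg P)
    (hwA : ∀ ω ∈ A, wg ω = (η ω)⁻¹ * (S ω * g ω))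
    (hwAc : ∀ ω ∈ Aᶜ, wg ω = g ω)
    (hb : ∀ᵐ ω ∂P, ω ∈ A → (P[fun ω' => S ω' * g ω' | 𝓖]) ω = η ω * (P[g | 𝓖]) ω)
    (hpos : ∀ᵐ ω ∂P, ω ∈ A → η ω ≠ 0) :
    ∫ ω, wg ω ∂P = ∫ ω, g ω ∂P := by
  haveI : SigmaFinite (P.trim hm) := by
    have : IsFiniteMeasure (P.trim hm) := isFiniteMeasure_trim hm
    infer_instance
  have hAΩ : MeasurableSet A := hm A hA𝓖
  set h : Ω → ℝ := A.indicator (fun ω => (η ω)⁻¹) with hh_def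
  have hh𝓖 : StronglyMeasurable[𝓖] h :=
    ((hη𝓖.measurable.inv).indicator hA𝓖).stronglyMeasurable
  have hkey : (fun ω => h ω * (S ω * g ω)) = A.indicator wg := by
    funext ω
    by_cases hω : ω ∈ A
    · rw [Set.indicator_of_mem hω, hh_def, Set.indicator_of_mem hω, hwA ω hω]
    · rw [Set.indicator_of_notMem hω, hh_def, Set.indicator_of_notMem hω, zero_mul]
  have hSgint : Integrable (fun ω => S ω * g ω) P := by
    refine hgint.mono (hS.aestronglyMeasurable.mul hgint.1) (ae_of_all _ fun ω => ?_)
    calc |S ω * g ω| = |S ω| * |g ω| := abs_mul _ _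
        _ ≤ 1 * |g ω| := by gcongr; exact hS1 ω
        _ = |g ω| := one_mul _
  have hhSgint : Integrable (fun ω => h ω * (S ω * g ω)) P := by
    rw [hkey]; exact hwgint.indicator hAΩ
  have hpull : P[fun ω => h ω * (S ω * g ω) | 𝓖]
      =ᵐ[P] fun ω => h ω * (P[fun ω' => S ω' * g ω' | 𝓖]) ω :=
    condExp_mul_of_stronglyMeasurable_left hh𝓖 hhSgint hSgint
  have hce : P[fun ω => h ω * (S ω * g ω) | 𝓖]
      =ᵐ[P] A.indicator (fun ω => (P[g | 𝓖]) ω) := by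
    filter_upwards [hpull, hb, hpos] with ω h1 h2 h3
    rw [h1]
    by_cases hω : ω ∈ A
    · rw [Set.indicator_of_mem hω, hh_def, Set.indicator_of_mem hω, h2 hω,
        ← mul_assoc, inv_mul_cancel₀ (h3 hω), one_mul]
    · rw [Set.indicator_of_notMem hω, hh_def, Set.indicator_of_notMem hω, zero_mul]
  have hintA : ∫ ω in A, wg ω ∂P = ∫ ω in A, g ω ∂P := by
    have e1 : ∫ ω in A, wg ω ∂P = ∫ ω, h ω * (S ω * g ω) ∂P := by
      rw [hkey, integral_indicator hAΩ]
    rw [e1, ← integral_condExp hm (f := fun ω => h ω * (S ω * g ω)),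
      integral_congr_ae hce, integral_indicator hAΩ,
      setIntegral_condExp hm hgint hA𝓖]
  have hintAc : ∫ ω in Aᶜ, wg ω ∂P = ∫ ω in Aᶜ, g ω ∂P :=
    setIntegral_congr_fun hAΩ.compl fun ω hω => hwAc ω hω
  calc ∫ ω, wg ω ∂P
      = (∫ ω in A, wg ω ∂P) + ∫ ω in Aᶜ, wg ω ∂P := (integral_add_compl hAΩ hwgint).symm
    _ = (∫ ω in A, g ω ∂P) + ∫ ω in Aᶜ, g ω ∂P := by rw [hintA, hintAc]
    _ = ∫ ω, g ω ∂P := integral_add_compl hAΩ hgint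

/-- General inverse-probability-weighting identity for arbitrary coarsening: under
assumptions (a)–(c), for every measurable `φ` with `φ(X)` and `w·φ(X)` integrable
and satisfying `E[S·φ(X)|𝓖] = η·E[φ(X)|𝓖]` a.e. on `{C ≠ ∞}`,
`E[w·φ(X)] = E[φ(X)]`. -/
theorem general_ipw_identity
    {Ω : Type*} [MeasurableSpace Ω] (P : Measure Ω) [IsProbabilityMeasure P]
    {𝒳 : Type*} [MeasurableSpace 𝒳] {𝒴 : Type*} [MeasurableSpace 𝒴]
    {K : Type*} [MeasurableSpace K] [MeasurableSingletonClass K] [Countable K] [DecidableEq K]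
    (infty : K)
    (X : Ω → 𝒳) (C : Ω → K) (W : Ω → 𝒴) (S : Ω → ℝ)
    (hX : Measurable X) (hC : Measurable C) (hW : Measurable W) (hS : Measurable S)
    (hS01 : ∀ ω, S ω = 0 ∨ S ω = 1)
    (𝓖 : MeasurableSpace Ω)
    (h𝓖 : 𝓖 = MeasurableSpace.comap (fun ω => (C ω, W ω)) inferInstance)
    (η : Ω → ℝ) (hη : η = P[S | 𝓖])
    (w : Ω → ℝ) (hw : w = fun ω => if C ω = infty then 1 else S ω / η ω)
    -- (a) on {C = ∞} the full data are initially observed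
    (ha : ∀ f : 𝒳 → ℝ, Measurable f → (∃ B, ∀ x, |f x| ≤ B) →
      ∀ᵐ ω ∂P, C ω = infty → (P[fun ω' => f (X ω') | 𝓖]) ω = f (X ω))
    -- (b) no informative second-stage missingness (Assumption 4)
    (hb : ∀ f : 𝒳 → ℝ, Measurable f → (∃ B, ∀ x, |f x| ≤ B) →
      ∀ᵐ ω ∂P, C ω ≠ infty →
        (P[fun ω' => S ω' * f (X ω') | 𝓖]) ω
          = η ω * (P[fun ω' => f (X ω') | 𝓖]) ω)
    -- (c) positivity (Assumption 5)
    (ε : ℝ) (hε : 0 < ε)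
    (hc : ∀ᵐ ω ∂P, C ω ≠ infty → ε ≤ η ω) :
    ∀ φ : 𝒳 → ℝ, Measurable φ →
      Integrable (fun ω => φ (X ω)) P →
      Integrable (fun ω => w ω * φ (X ω)) P →
      (∀ᵐ ω ∂P, C ω ≠ infty →
        (P[fun ω' => S ω' * φ (X ω') | 𝓖]) ω
          = η ω * (P[fun ω' => φ (X ω') | 𝓖]) ω) →
      ∫ ω, w ω * φ (X ω) ∂P = ∫ ω, φ (X ω) ∂P := by
  intro φ hφ hφint hwφint hbφ
  have hm0 := (hC.prodMk hW).comap_le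
  rw [← h𝓖] at hm0
  set A : Set Ω := {ω | C ω ≠ infty} with hA_def
  have hA𝓖 : MeasurableSet[𝓖] A := by
    rw [h𝓖]
    refine ⟨({infty}ᶜ : Set K) ×ˢ Set.univ,
      (measurableSet_singleton infty).compl.prod MeasurableSet.univ, ?_⟩
    ext ω; simp [hA_def]
  refine ipw_aux hm0 P hA𝓖 (hη ▸ stronglyMeasurable_condExp) hS
    (fun ω => by rcases hS01 ω with h0 | h0 <;> simp [h0])
    hφint hwφint ?_ ?_ ?_ ?_
  · intro ω hω
    simp only [hw]
    rw [if_neg hω]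
    ring
  · intro ω hω
    have : C ω = infty := by simpa [hA_def] using hω
    simp [hw, this]
  · exact hbφ
  · filter_upwards [hc] with ω h3 hω
    exact ne_of_gt (lt_of_lt_of_le hε (h3 hω))
end

section
/- Mean-recovery property of the observed-data influence function (kernel of Proposition 3): under assumptions (a)–(c), let φ : 𝒳 → ℝ be bounded measurable (playing the role of the full-data influence function χ̇(X; P*_X) evaluated at the truth) and let ν := E[φ(X)|𝓖]. Then E[w·(φ(X) − ν)] = 0 and E[ν + w·(φ(X) − ν)] = E[φ(X)]; that is, the observed-data influence function τ̇(O;P) = ν_C(σ_C(X)) + (S/η(C, σ_C(X)))·{χ̇(X; P*_X) − ν_C(σ_C(X))} of Proposition 3 has P-mean equal to the P*-mean of the full-data influence function. -/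
/-!
Split `w · (φ(X) − ν)` along `{C = ∞}`. On `{C = ∞}` the weight is `1` and `ν = φ(X)` by
(a), so that part vanishes almost surely. On `{C ≠ ∞}` the factor `1/η` is `𝓖`-measurable and
bounded by positivity (c), so it can be pulled out of `E[· | 𝓖]`, leaving
`E[S · (φ(X) − ν) | 𝓖] = E[S φ(X) | 𝓖] − η ν`, which is zero by (b). Hence
`E[w (φ(X) − ν)] = 0`, and adding `E[ν] = E[φ(X)]` gives the second identity.
-/

open MeasureTheory
open scoped ENNReal

namespace MeasureTheory

variable {Ω : Type*} {m m₀ : MeasurableSpace Ω} {P : Measure Ω}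

theorem integral_mul_eq_zero_of_mul_condExp_ae_eq_zero [IsFiniteMeasure P] (hm : m ≤ m₀)
    {g f : Ω → ℝ} (hg : StronglyMeasurable[m] g) (hgf : Integrable (g * f) P)
    (hf : Integrable f P) (h : g * P[f|m] =ᵐ[P] 0) : ∫ ω, (g * f) ω ∂P = 0 := by
  rw [← integral_condExp hm,
    integral_congr_ae ((condExp_mul_of_stronglyMeasurable_left hg hgf hf).trans h)]
  exact integral_zero _ _

theorem condExp_mul_sub_condExp_ae_eq {S Y : Ω → ℝ} (hS : Integrable S P)
    (hY : MemLp Y ∞ P) :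
    P[S * (Y - P[Y|m]) | m] =ᵐ[P] P[S * Y | m] - P[S|m] * P[Y|m] := by
  have hν : MemLp P[Y|m] ∞ P := hY.condExp le_top
  have hsplit : S * (Y - P[Y|m]) = S * Y - P[Y|m] * S := by ring
  rw [hsplit]
  filter_upwards [condExp_sub (hS.mul_of_top_left hY) (hS.mul_of_top_right hν) m,
    condExp_mul_of_stronglyMeasurable_left stronglyMeasurable_condExp
      (hS.mul_of_top_right hν) hS] with ω hsub hpull
  rw [hsub, Pi.sub_apply, hpull, Pi.sub_apply, Pi.mul_apply, Pi.mul_apply,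
    mul_comm (P[S|m] ω)]

section InverseProbabilityWeighting

variable {A : Set Ω} {S Y w : Ω → ℝ} {ε : ℝ}

theorem stronglyMeasurable_indicator_compl_inv_condExp (hA : MeasurableSet[m] A) :
    StronglyMeasurable[m] (Aᶜ.indicator (P[S|m])⁻¹) :=
  (stronglyMeasurable_condExp.measurable.inv.indicator hA.compl).stronglyMeasurable

theorem memLp_top_indicator_compl_inv_condExp (hm : m ≤ m₀) (hA : MeasurableSet[m] A)
    (hε : 0 < ε) (hpos : ∀ᵐ ω ∂P, ω ∉ A → ε ≤ P[S|m] ω) :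
    MemLp (Aᶜ.indicator (P[S|m])⁻¹) ∞ P := by
  refine memLp_top_of_bound
    ((stronglyMeasurable_indicator_compl_inv_condExp hA).mono hm).aestronglyMeasurable ε⁻¹ ?_
  filter_upwards [hpos] with ω hω
  by_cases hωA : ω ∈ A
  · simp [hωA, hε.le]
  · have hη := hω hωA
    simpa [hωA, abs_of_pos (hε.trans_le hη)] using inv_anti₀ hε hη

theorem integral_indicator_compl_inv_condExp_mul_sub_condExp_eq_zero [IsFiniteMeasure P]
    (hm : m ≤ m₀) (hA : MeasurableSet[m] A) (hε : 0 < ε) (hS : Integrable S P)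
    (hY : MemLp Y ∞ P) (hpos : ∀ᵐ ω ∂P, ω ∉ A → ε ≤ P[S|m] ω)
    (hSY : ∀ᵐ ω ∂P, ω ∉ A → P[S * Y|m] ω = P[S|m] ω * P[Y|m] ω) :
    ∫ ω, (Aᶜ.indicator (P[S|m])⁻¹ * (S * (Y - P[Y|m]))) ω ∂P = 0 := by
  have hf : Integrable (S * (Y - P[Y|m])) P := hS.mul_of_top_left (hY.sub (hY.condExp le_top))
  refine integral_mul_eq_zero_of_mul_condExp_ae_eq_zero hm
    (stronglyMeasurable_indicator_compl_inv_condExp hA)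
    (hf.mul_of_top_right (memLp_top_indicator_compl_inv_condExp hm hA hε hpos)) hf ?_
  filter_upwards [condExp_mul_sub_condExp_ae_eq (m := m) hS hY, hSY] with ω h hω
  by_cases hωA : ω ∈ A
  · simp [hωA]
  · simp only [Pi.mul_apply, h, Pi.sub_apply, hω hωA, sub_self, mul_zero, Pi.zero_apply]

theorem mul_eq_indicator_add_indicator_compl_inv_condExp_mul (d : Ω → ℝ)
    (hwA : ∀ ω ∈ A, w ω = 1) (hwAc : ∀ ω ∉ A, w ω = S ω / P[S|m] ω) :
    w * d = A.indicator d + Aᶜ.indicator (P[S|m])⁻¹ * (S * d) := by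
  ext ω
  by_cases hωA : ω ∈ A
  · simp [hωA, hwA ω hωA]
  · simp [hωA, hwAc ω hωA, div_eq_inv_mul, mul_assoc]

theorem integrable_mul_sub_condExp_of_ipw [IsFiniteMeasure P] (hm : m ≤ m₀)
    (hA : MeasurableSet[m] A) (hε : 0 < ε) (hS : Integrable S P) (hY : MemLp Y ∞ P)
    (hpos : ∀ᵐ ω ∂P, ω ∉ A → ε ≤ P[S|m] ω)
    (hwA : ∀ ω ∈ A, w ω = 1) (hwAc : ∀ ω ∉ A, w ω = S ω / P[S|m] ω) :
    Integrable (fun ω => w ω * (Y ω - P[Y|m] ω)) P := by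
  have hd : MemLp (Y - P[Y|m]) ∞ P := hY.sub (hY.condExp le_top)
  change Integrable (w * (Y - P[Y|m])) P
  rw [mul_eq_indicator_add_indicator_compl_inv_condExp_mul _ hwA hwAc]
  exact ((hd.integrable le_top).indicator (hm _ hA)).add
    ((hS.mul_of_top_left hd).mul_of_top_right
      (memLp_top_indicator_compl_inv_condExp hm hA hε hpos))

theorem integral_mul_sub_condExp_eq_zero_of_ipw [IsFiniteMeasure P] (hm : m ≤ m₀)
    (hA : MeasurableSet[m] A) (hε : 0 < ε) (hS : Integrable S P) (hY : MemLp Y ∞ P)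
    (hpos : ∀ᵐ ω ∂P, ω ∉ A → ε ≤ P[S|m] ω)
    (hYA : ∀ᵐ ω ∂P, ω ∈ A → P[Y|m] ω = Y ω)
    (hSY : ∀ᵐ ω ∂P, ω ∉ A → P[S * Y|m] ω = P[S|m] ω * P[Y|m] ω)
    (hwA : ∀ ω ∈ A, w ω = 1) (hwAc : ∀ ω ∉ A, w ω = S ω / P[S|m] ω) :
    ∫ ω, w ω * (Y ω - P[Y|m] ω) ∂P = 0 := by
  have hd : MemLp (Y - P[Y|m]) ∞ P := hY.sub (hY.condExp le_top)
  have hobserved : A.indicator (Y - P[Y|m]) =ᵐ[P] 0 := by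
    filter_upwards [hYA] with ω hω
    by_cases hωA : ω ∈ A
    · simp [hωA, hω hωA]
    · simp [hωA]
  change ∫ ω, (w * (Y - P[Y|m])) ω ∂P = 0
  rw [mul_eq_indicator_add_indicator_compl_inv_condExp_mul _ hwA hwAc,
    integral_add' ((hd.integrable le_top).indicator (hm _ hA))
      ((hS.mul_of_top_left hd).mul_of_top_right
        (memLp_top_indicator_compl_inv_condExp hm hA hε hpos)),
    integral_congr_ae hobserved,
    integral_indicator_compl_inv_condExp_mul_sub_condExp_eq_zero hm hA hε hS hY hpos hSY]
  simp

theorem integral_condExp_add_mul_sub_condExp_of_ipw [IsFiniteMeasure P] (hm : m ≤ m₀)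
    (hA : MeasurableSet[m] A) (hε : 0 < ε) (hS : Integrable S P) (hY : MemLp Y ∞ P)
    (hpos : ∀ᵐ ω ∂P, ω ∉ A → ε ≤ P[S|m] ω)
    (hYA : ∀ᵐ ω ∂P, ω ∈ A → P[Y|m] ω = Y ω)
    (hSY : ∀ᵐ ω ∂P, ω ∉ A → P[S * Y|m] ω = P[S|m] ω * P[Y|m] ω)
    (hwA : ∀ ω ∈ A, w ω = 1) (hwAc : ∀ ω ∉ A, w ω = S ω / P[S|m] ω) :
    ∫ ω, (P[Y|m] ω + w ω * (Y ω - P[Y|m] ω)) ∂P = ∫ ω, Y ω ∂P := by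
  rw [integral_add integrable_condExp
      (integrable_mul_sub_condExp_of_ipw hm hA hε hS hY hpos hwA hwAc),
    integral_mul_sub_condExp_eq_zero_of_ipw hm hA hε hS hY hpos hYA hSY hwA hwAc,
    add_zero, integral_condExp hm]

end InverseProbabilityWeighting

end MeasureTheory

/-- Mean-recovery property of the observed-data influence function (kernel of
Proposition 3): under assumptions (a)–(c), for bounded measurable `φ` with
`ν := E[φ(X)|𝓖]`, `E[w·(φ(X) − ν)] = 0` and `E[ν + w·(φ(X) − ν)] = E[φ(X)]`. -/
theorem observed_data_IF_mean_recovery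
    {Ω : Type*} [MeasurableSpace Ω] (P : Measure Ω) [IsProbabilityMeasure P]
    {𝒳 : Type*} [MeasurableSpace 𝒳] {𝒴 : Type*} [MeasurableSpace 𝒴]
    {K : Type*} [MeasurableSpace K] [MeasurableSingletonClass K] [Countable K] [DecidableEq K]
    (infty : K)
    (X : Ω → 𝒳) (C : Ω → K) (W : Ω → 𝒴) (S : Ω → ℝ)
    (hX : Measurable X) (hC : Measurable C) (hW : Measurable W) (hS : Measurable S)
    (hS01 : ∀ ω, S ω = 0 ∨ S ω = 1)
    (𝓖 : MeasurableSpace Ω)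
    (h𝓖 : 𝓖 = MeasurableSpace.comap (fun ω => (C ω, W ω)) inferInstance)
    (η : Ω → ℝ) (hη : η = P[S | 𝓖])
    (w : Ω → ℝ) (hw : w = fun ω => if C ω = infty then 1 else S ω / η ω)
    -- (a) on {C = ∞} the full data are initially observed
    (ha : ∀ f : 𝒳 → ℝ, Measurable f → (∃ B, ∀ x, |f x| ≤ B) →
      ∀ᵐ ω ∂P, C ω = infty → (P[fun ω' => f (X ω') | 𝓖]) ω = f (X ω))
    -- (b) no informative second-stage missingness (Assumption 4)
    (hb : ∀ f : 𝒳 → ℝ, Measurable f → (∃ B, ∀ x, |f x| ≤ B) →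
      ∀ᵐ ω ∂P, C ω ≠ infty →
        (P[fun ω' => S ω' * f (X ω') | 𝓖]) ω
          = η ω * (P[fun ω' => f (X ω') | 𝓖]) ω)
    -- (c) positivity (Assumption 5)
    (ε : ℝ) (hε : 0 < ε)
    (hc : ∀ᵐ ω ∂P, C ω ≠ infty → ε ≤ η ω) :
    ∀ φ : 𝒳 → ℝ, Measurable φ → (∃ B, ∀ x, |φ x| ≤ B) →
      (∫ ω, w ω * (φ (X ω) - (P[fun ω' => φ (X ω') | 𝓖]) ω) ∂P = 0)
      ∧ ∫ ω, ((P[fun ω' => φ (X ω') | 𝓖]) ω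
            + w ω * (φ (X ω) - (P[fun ω' => φ (X ω') | 𝓖]) ω)) ∂P
          = ∫ ω, φ (X ω) ∂P := by
  intro φ hφ hφB
  subst hη hw
  have hm : 𝓖 ≤ _ := h𝓖.trans_le (hC.prodMk hW).comap_le
  have hA : MeasurableSet[𝓖] (C ⁻¹' {infty}) := by
    rw [h𝓖]
    exact measurable_fst.comp (comap_measurable _) (measurableSet_singleton infty)
  have hSint : Integrable S P := by
    refine (memLp_top_of_bound hS.aestronglyMeasurable 1 (.of_forall fun ω => ?_)).integrable
      le_top
    rcases hS01 ω with h | h <;> simp [h]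
  have hY : MemLp (fun ω => φ (X ω)) ∞ P := by
    obtain ⟨B, hB⟩ := hφB
    exact memLp_top_of_bound (hφ.comp hX).aestronglyMeasurable B (.of_forall fun ω => hB (X ω))
  exact ⟨integral_mul_sub_condExp_eq_zero_of_ipw hm hA hε hSint hY hc (ha φ hφ hφB)
      (hb φ hφ hφB) (fun _ h => if_pos h) (fun _ h => if_neg h),
    integral_condExp_add_mul_sub_condExp_of_ipw hm hA hε hSint hY hc (ha φ hφ hφB)
      (hb φ hφ hφB) (fun _ h => if_pos h) (fun _ h => if_neg h)⟩
end
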